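/- Let $p>1$, $\epsilon>0$, $b_\epsilon(t) = t(t^2+\epsilon)^{(p-2)/2}$, and $B_\epsilon(t) = \int_0^t b_\epsilon(\tau)\,d\tau$. Define $C_p := 2^{1/(p-1)}$ if $1 < p < 2$ and $C_p := p$ if $p \ge 2$. Then for all $t > 0$: $t\, b_\epsilon(t/C_p) \le B_\epsilon(t)$. -/

import Mathlib

/-!
The integral is explicit, `B_ε(t) = ((t² + ε)^(p/2) - ε^(p/2)) / p`. With `X = t² + ε` we have
`t b_ε(t) = (X - ε) X^(p/2 - 1)`, so the tangent-line inequality for the concave `x ↦ x^(p/2)`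
(`p ≤ 2`), resp. monotonicity of `x ↦ x^(p/2 - 1)` (`p ≥ 2`), gives `t b_ε(t) / 2 ≤ B_ε(t)`,
resp. `t b_ε(t) / p ≤ B_ε(t)`. On the other side, for `C ≥ 1`, `b_ε(t / C) ≤ b_ε(t) / C^(p-1)`
when `p ≤ 2` and `b_ε(t / C) ≤ b_ε(t) / C` when `p ≥ 2`; `C_p` is chosen so that the
denominators match.
-/

open Real

lemma mul_sub_mul_rpow_sub_one_le_rpow_sub_rpow {a x y : ℝ} (ha₀ : 0 ≤ a) (ha₁ : a ≤ 1)
    (hx : 0 ≤ x) (hy : 0 < y) : a * (y - x) * y ^ (a - 1) ≤ y ^ a - x ^ a := by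
  have amgm := mul_le_mul_of_nonneg_left
    (geom_mean_le_arith_mean2_weighted ha₀ (sub_nonneg.2 ha₁) hx hy.le (add_sub_cancel a 1))
    (rpow_nonneg hy.le (a - 1))
  have h₁ : y ^ (a - 1) * y ^ (1 - a) = 1 := by rw [← rpow_add hy]; simp
  have h₂ : y ^ (a - 1) * y = y ^ a := by rw [← rpow_add_one hy.ne', sub_add_cancel]
  linear_combination amgm - x ^ a * h₁ + h₂

lemma sub_mul_rpow_sub_one_le_rpow_sub_rpow {a x y : ℝ} (ha : 1 ≤ a) (hx : 0 ≤ x) (hxy : x ≤ y) :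
    (y - x) * y ^ (a - 1) ≤ y ^ a - x ^ a := by
  have hsplit : ∀ z : ℝ, 0 ≤ z → z ^ a = z * z ^ (a - 1) := fun z hz ↦ by
    rw [← rpow_one_add' hz (by linarith), add_sub_cancel]
  have := rpow_le_rpow hx hxy (by linarith : 0 ≤ a - 1)
  rw [hsplit x hx, hsplit y (hx.trans hxy)]
  nlinarith

noncomputable def bEps (p ε t : ℝ) : ℝ := t * (t ^ 2 + ε) ^ ((p - 2) / 2)

section

variable {p ε : ℝ}

lemma hasDerivAt_rpow_sq_add_div (hp : p ≠ 0) (hε : 0 < ε) (t : ℝ) :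
    HasDerivAt (fun x ↦ (x ^ 2 + ε) ^ (p / 2) / p) (bEps p ε t) t := by
  have hsq : HasDerivAt (fun x ↦ x ^ 2 + ε) (2 * t) t := by
    simpa using (hasDerivAt_pow 2 t).add_const ε
  refine ((hsq.rpow_const (p := p / 2) (Or.inl (by positivity))).div_const p).congr_deriv ?_
  rw [bEps, show p / 2 - 1 = (p - 2) / 2 by ring]
  field_simp

lemma continuous_bEps (hε : 0 < ε) : Continuous (bEps p ε) :=
  continuous_id.mul <| (by fun_prop : Continuous fun t : ℝ ↦ t ^ 2 + ε).rpow_const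
    fun t ↦ Or.inl (by positivity)

lemma integral_bEps (hp : p ≠ 0) (hε : 0 < ε) (t : ℝ) :
    ∫ τ in (0 : ℝ)..t, bEps p ε τ = ((t ^ 2 + ε) ^ (p / 2) - ε ^ (p / 2)) / p := by
  rw [intervalIntegral.integral_eq_sub_of_hasDerivAt
    (fun τ _ ↦ hasDerivAt_rpow_sq_add_div hp hε τ) ((continuous_bEps hε).intervalIntegrable _ _)]
  simp [sub_div]

lemma mul_bEps_div_two_le_integral (hp₀ : 0 < p) (hp₂ : p ≤ 2) (hε : 0 < ε) (t : ℝ) :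
    t * bEps p ε t / 2 ≤ ∫ τ in (0 : ℝ)..t, bEps p ε τ := by
  have tangent := mul_sub_mul_rpow_sub_one_le_rpow_sub_rpow (a := p / 2) (by positivity)
    (by linarith) hε.le (by positivity : 0 < t ^ 2 + ε)
  rw [show p / 2 - 1 = (p - 2) / 2 by ring] at tangent
  rw [integral_bEps hp₀.ne' hε, le_div_iff₀ hp₀, bEps]
  linear_combination tangent

lemma mul_bEps_div_le_integral (hp : 2 ≤ p) (hε : 0 < ε) (t : ℝ) :
    t * bEps p ε t / p ≤ ∫ τ in (0 : ℝ)..t, bEps p ε τ := by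
  have secant := sub_mul_rpow_sub_one_le_rpow_sub_rpow (a := p / 2) (by linarith) hε.le
    (by nlinarith : ε ≤ t ^ 2 + ε)
  rw [show p / 2 - 1 = (p - 2) / 2 by ring] at secant
  rw [integral_bEps (by positivity) hε, bEps]
  gcongr
  linear_combination secant

lemma bEps_div_le_of_two_le {C t : ℝ} (hp : 2 ≤ p) (hε : 0 ≤ ε) (hC : 1 ≤ C) (ht : 0 ≤ t) :
    bEps p ε (t / C) ≤ bEps p ε t / C := by
  have hbase : (t / C) ^ 2 + ε ≤ t ^ 2 + ε := by
    gcongr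
    exact div_le_self ht hC
  calc t / C * ((t / C) ^ 2 + ε) ^ ((p - 2) / 2)
      ≤ t / C * (t ^ 2 + ε) ^ ((p - 2) / 2) :=
        mul_le_mul_of_nonneg_left (rpow_le_rpow (by positivity) hbase (by linarith))
          (by positivity)
    _ = bEps p ε t / C := by rw [bEps]; ring

lemma bEps_div_le_of_le_two {C t : ℝ} (hp : p ≤ 2) (hε : 0 < ε) (hC : 1 ≤ C) (ht : 0 ≤ t) :
    bEps p ε (t / C) ≤ bEps p ε t / C ^ (p - 1) := by
  have hC₀ : 0 < C := by linarith
  have hbase : (t ^ 2 + ε) / C ^ 2 ≤ (t / C) ^ 2 + ε := by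
    rw [div_pow, add_div]
    gcongr
    exact div_le_self hε.le (one_le_pow₀ hC)
  have hpow : ((t / C) ^ 2 + ε) ^ ((p - 2) / 2) ≤ (t ^ 2 + ε) ^ ((p - 2) / 2) / C ^ (p - 2) :=
    calc ((t / C) ^ 2 + ε) ^ ((p - 2) / 2)
        ≤ ((t ^ 2 + ε) / C ^ 2) ^ ((p - 2) / 2) :=
          rpow_le_rpow_of_nonpos (by positivity) hbase (by linarith)
      _ = (t ^ 2 + ε) ^ ((p - 2) / 2) / C ^ (p - 2) := by
          rw [div_rpow (by positivity) (by positivity), ← rpow_natCast_mul hC₀.le]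
          congr 2
          push_cast
          ring
  calc t / C * ((t / C) ^ 2 + ε) ^ ((p - 2) / 2)
      ≤ t / C * ((t ^ 2 + ε) ^ ((p - 2) / 2) / C ^ (p - 2)) := by gcongr
    _ = bEps p ε t / C ^ (p - 1) := by
        rw [bEps, show p - 1 = p - 2 + 1 by ring, rpow_add_one hC₀.ne']
        field_simp

end

theorem stmt_11 (p ε : ℝ) (hp : 1 < p) (hε : 0 < ε)
    (Cp : ℝ) (hCp : Cp = if p < 2 then (2 : ℝ) ^ (1 / (p - 1)) else p) :
    ∀ t : ℝ, 0 < t →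
      t * ((t / Cp) * ((t / Cp) ^ 2 + ε) ^ ((p - 2) / 2)) ≤
        ∫ τ in (0:ℝ)..t, τ * (τ ^ 2 + ε) ^ ((p - 2) / 2) := by
  intro t ht
  change t * bEps p ε (t / Cp) ≤ ∫ τ in (0 : ℝ)..t, bEps p ε τ
  split_ifs at hCp with hp₂
  · have hC : 1 ≤ Cp := hCp ▸ one_le_rpow (by norm_num) (by bound)
    have hCpow : Cp ^ (p - 1) = 2 := by
      rw [hCp, ← rpow_mul zero_le_two, one_div_mul_cancel (by linarith), rpow_one]
    calc t * bEps p ε (t / Cp) ≤ t * (bEps p ε t / Cp ^ (p - 1)) :=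
          mul_le_mul_of_nonneg_left (bEps_div_le_of_le_two hp₂.le hε hC ht.le) ht.le
      _ = t * bEps p ε t / 2 := by rw [hCpow, mul_div_assoc]
      _ ≤ _ := mul_bEps_div_two_le_integral (by linarith) hp₂.le hε t
  · rw [hCp]
    replace hp₂ := not_lt.mp hp₂
    calc t * bEps p ε (t / p) ≤ t * (bEps p ε t / p) :=
          mul_le_mul_of_nonneg_left (bEps_div_le_of_two_le hp₂ hε.le (by linarith) ht.le) ht.le
      _ = t * bEps p ε t / p := (mul_div_assoc ..).symm
      _ ≤ _ := mul_bEps_div_le_integral hp₂ hε t
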